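/- Let H be a hypergraph with a red-blue partition (Red, X, Blue) of V(H) such that no hyperedge contains both a red and a blue vertex, and let F be a reduced elimination forest of H. Let P be a directed root-to-descendant path in F whose final vertex is not a leaf, and W a nonempty set of children of the final vertex of P. If the context factor Cont_F(P,W) is contained in Red ∪ Blue and the vertex set of P is monochromatic, then Cont_F(P,W) is monochromatic. -/

import Mathlib

/-- A hypergraph on vertex type `V`: a set of nonempty hyperedges. -/
structure SetHypergraph (V : Type*) where
  E : Set (Set V)
  edge_nonempty : ∀ e ∈ E, e.Nonempty

/-- Two vertices are adjacent if they are distinct and share a hyperedge. -/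
def SetHypergraph.adj {V : Type*} (H : SetHypergraph V) (u v : V) : Prop :=
  u ≠ v ∧ ∃ e ∈ H.E, u ∈ e ∧ v ∈ e

/-- A rooted forest on `V`, given by parent pointers, with no infinite ancestor chains. -/
structure RootedForest (V : Type*) where
  parent : V → Option V
  wf : WellFounded fun a b => parent b = some a

/-- `F.anc a b` : `a` is an ancestor of `b` (every vertex is an ancestor of itself). -/
def RootedForest.anc {V : Type*} (F : RootedForest V) (a b : V) : Prop :=
  Relation.ReflTransGen (fun x y => F.parent x = some y) b a

/-- The set of descendants of `x` (including `x` itself). -/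
def RootedForest.desc {V : Type*} (F : RootedForest V) (x : V) : Set V :=
  {v | F.anc x v}

/-- `F` is an elimination forest of `H`: any two adjacent vertices are in
ancestor–descendant relation. -/
def IsEliminationForest {V : Type*} (H : SetHypergraph V) (F : RootedForest V) : Prop :=
  ∀ u v, H.adj u v → F.anc u v ∨ F.anc v u

/-- `F` is reduced: every non-leaf vertex `u` is adjacent in `H` to the subtree
rooted at each of its children. -/
def IsReducedForest {V : Type*} (H : SetHypergraph V) (F : RootedForest V) : Prop :=
  ∀ u v, F.parent v = some u → ∃ w ∈ F.desc v, H.adj u w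

/-- The subhypergraph of `H` induced by `S` is connected. -/
def HConnectedOn {V : Type*} (H : SetHypergraph V) (S : Set V) : Prop :=
  ∀ a ∈ S, ∀ b ∈ S,
    Relation.ReflTransGen (fun x y => x ∈ S ∧ y ∈ S ∧ H.adj x y) a b

/-! Fix the colour `A` of the spine. A vertex `v` of the context factor off the spine lies below a
child `c` of some spine vertex `u` with `c` neither on the spine nor in `W`, and then the whole
subtree of `c` lies in the context factor. Reducedness gives an edge from `u` into that subtree, so
the subtree meets `A`; and by induction over the (finite) forest, reducedness also makes every
subtree connected in `H`. Since no edge joins the two colours, a connected set inside `A ∪ B`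
meeting `A` lies in `A`. -/

namespace RootedForest

variable {V : Type*} (F : RootedForest V)

theorem anc_of_parent_eq {a c : V} (h : F.parent c = some a) : F.anc a c :=
  .single h

theorem anc_trans {a b c : V} (hab : F.anc a b) (hbc : F.anc b c) : F.anc a c :=
  hbc.trans hab

theorem not_transGen_self (a : V) :
    ¬ Relation.TransGen (fun x y => F.parent x = some y) a a := fun h =>
  F.wf.transGen.irrefl.irrefl a (Relation.transGen_swap.mpr h)

theorem not_anc_of_parent_eq {t y : V} (h : F.parent t = some y) : ¬ F.anc t y := fun hty =>
  F.not_transGen_self t (.head' h hty)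

theorem anc_or_anc_of_anc {a b z : V} (ha : F.anc a z) (hb : F.anc b z) :
    F.anc a b ∨ F.anc b a := by
  induction ha using Relation.ReflTransGen.head_induction_on with
  | refl => exact .inr hb
  | head hzp _ ih =>
    rcases hb.cases_head with rfl | ⟨p', hzp', hp'b⟩
    · exact .inl (.head hzp ‹_›)
    · cases hzp.symm.trans hzp'
      exact ih hp'b

theorem exists_child_of_anc {a b : V} (h : F.anc a b) (hne : b ≠ a) :
    ∃ c, F.parent c = some a ∧ F.anc c b := by
  induction h using Relation.ReflTransGen.head_induction_on with
  | refl => exact absurd rfl hne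
  | @head p q hpq _ ih =>
    by_cases hqa : q = a
    · exact ⟨p, hqa ▸ hpq, .refl⟩
    · obtain ⟨c, hca, hcq⟩ := ih hqa
      exact ⟨c, hca, F.anc_trans hcq (F.anc_of_parent_eq hpq)⟩

theorem anc_of_anc_of_parent_eq {a b p : V} (hab : F.anc a b) (hne : a ≠ b)
    (hp : F.parent b = some p) : F.anc a p := by
  rcases hab.cases_head with rfl | ⟨p', hbp', hp'a⟩
  · exact absurd rfl hne
  · cases hp.symm.trans hbp'
    exact hp'a

theorem wellFounded_child [Finite V] : WellFounded fun c a => F.parent c = some a := by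
  have : Std.Irrefl (Relation.TransGen fun c a => F.parent c = some a) := ⟨F.not_transGen_self⟩
  exact Subrelation.wf (r := Relation.TransGen _) (fun h => .single h)
    (Finite.wellFounded_of_trans_of_irrefl _)

theorem mem_spine_or_exists_child {x y v : V} (hxy : F.anc x y) (hxv : F.anc x v) :
    (F.anc x v ∧ F.anc v y) ∨
      ∃ u c, (F.anc x u ∧ F.anc u y) ∧ F.parent c = some u ∧ ¬ (F.anc x c ∧ F.anc c y) ∧
        F.anc c v := by
  induction hxv using Relation.ReflTransGen.head_induction_on with
  | refl => exact .inl ⟨.refl, hxy⟩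
  | @head v p hvp _ ih =>
    by_cases hv : F.anc x v ∧ F.anc v y
    · exact .inl hv
    · rcases ih with hp | ⟨u, c, hu, hcu, hc, hcp⟩
      · exact .inr ⟨p, v, hp, hvp, hv, .refl⟩
      · exact .inr ⟨u, c, hu, hcu, hc, F.anc_trans hcp (F.anc_of_parent_eq hvp)⟩

theorem desc_subset_contextFactor {x y u c : V} {W : Set V}
    (hW : ∀ w ∈ W, F.parent w = some y) (hu : F.anc x u ∧ F.anc u y)
    (hcu : F.parent c = some u) (hc : ¬ (F.anc x c ∧ F.anc c y)) (hcW : c ∉ W) :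
    F.desc c ⊆ F.desc x \ ⋃ w ∈ W, F.desc w := by
  have hxc : F.anc x c := F.anc_trans hu.1 (F.anc_of_parent_eq hcu)
  intro z hcz
  refine ⟨F.anc_trans hxc hcz, fun hzW => ?_⟩
  obtain ⟨t, ht, htz⟩ := Set.mem_iUnion₂.mp hzW
  have hct : c ≠ t := fun h => hcW (h ▸ ht)
  rcases F.anc_or_anc_of_anc hcz htz with hc_t | ht_c
  · exact hc ⟨hxc, F.anc_of_anc_of_parent_eq hc_t hct (hW t ht)⟩
  · have htu := F.anc_of_anc_of_parent_eq ht_c hct.symm hcu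
    exact F.not_anc_of_parent_eq (hW t ht) (F.anc_trans htu hu.2)

end RootedForest

namespace SetHypergraph

variable {V : Type*} (H : SetHypergraph V)

theorem adj_symm {u v : V} (h : H.adj u v) : H.adj v u :=
  ⟨h.1.symm, h.2.imp fun _ ⟨he, hu, hv⟩ => ⟨he, hv, hu⟩⟩

theorem mem_of_adj_of_separated {A B : Set V}
    (hsep : ∀ e ∈ H.E, ¬((e ∩ A).Nonempty ∧ (e ∩ B).Nonempty)) {p q : V} (hpq : H.adj p q)
    (hp : p ∈ A) (hq : q ∈ A ∪ B) : q ∈ A := by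
  obtain ⟨-, e, he, hpe, hqe⟩ := hpq
  exact hq.resolve_right fun hqB => hsep e he ⟨⟨p, hpe, hp⟩, ⟨q, hqe, hqB⟩⟩

theorem reflTransGen_adjOn_mono {S T : Set V} (hST : S ⊆ T) {a b : V}
    (h : Relation.ReflTransGen (fun x y => x ∈ S ∧ y ∈ S ∧ H.adj x y) a b) :
    Relation.ReflTransGen (fun x y => x ∈ T ∧ y ∈ T ∧ H.adj x y) a b :=
  Relation.ReflTransGen.mono (fun _ _ h => ⟨hST h.1, hST h.2.1, h.2.2⟩) _ _ h

theorem hConnectedOn_of_reflTransGen {S : Set V} {a : V}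
    (h : ∀ b ∈ S, Relation.ReflTransGen (fun x y => x ∈ S ∧ y ∈ S ∧ H.adj x y) a b) :
    HConnectedOn H S := by
  intro b hb b' hb'
  have hba : Relation.ReflTransGen (fun x y => x ∈ S ∧ y ∈ S ∧ H.adj x y) b a :=
    Relation.ReflTransGen.mono (fun _ _ h => ⟨h.2.1, h.1, H.adj_symm h.2.2⟩) _ _
      (Relation.ReflTransGen.swap _ _ (h b hb))
  exact hba.trans (h b' hb')

end SetHypergraph

section ContextFactor

variable {V : Type*}

theorem HConnectedOn.subset_of_separated {H : SetHypergraph V} {S A B : Set V}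
    (hS : HConnectedOn H S) (hSAB : S ⊆ A ∪ B)
    (hsep : ∀ e ∈ H.E, ¬((e ∩ A).Nonempty ∧ (e ∩ B).Nonempty)) {a : V} (haS : a ∈ S)
    (haA : a ∈ A) : S ⊆ A := by
  intro b hbS
  have hab := hS a haS b hbS
  clear hbS
  induction hab with
  | refl => exact haA
  | tail _ hpq ih => exact H.mem_of_adj_of_separated hsep hpq.2.2 ih (hSAB hpq.2.1)

/- Finiteness is needed: on an infinite ray `c₀, c₁, …` the edges `{cᵢ, cᵢ₊₂}` make the forest
reduced but split the ray by parity. -/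
theorem IsReducedForest.hConnectedOn_desc [Finite V] {H : SetHypergraph V} {F : RootedForest V}
    (hred : IsReducedForest H F) (a : V) : HConnectedOn H (F.desc a) := by
  induction a using F.wellFounded_child.induction with
  | _ a ih =>
  refine H.hConnectedOn_of_reflTransGen (a := a) fun b hab => ?_
  by_cases hba : b = a
  · exact hba ▸ .refl
  obtain ⟨c, hca, hcb⟩ := F.exists_child_of_anc hab hba
  obtain ⟨w, hcw, haw⟩ := hred a c hca
  have hsub : F.desc c ⊆ F.desc a := fun _ hcz => F.anc_trans (F.anc_of_parent_eq hca) hcz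
  have hwb := H.reflTransGen_adjOn_mono hsub
    ((ih c hca w hcw c .refl).trans (ih c hca c .refl b hcb))
  exact .head ⟨.refl, hsub hcw, haw⟩ hwb

theorem contextFactor_subset_of_spine_subset [Finite V] {H : SetHypergraph V}
    {F : RootedForest V} (hred : IsReducedForest H F) {A B : Set V}
    (hsep : ∀ e ∈ H.E, ¬((e ∩ A).Nonempty ∧ (e ∩ B).Nonempty)) {x y : V} (hxy : F.anc x y)
    {W : Set V} (hW : ∀ w ∈ W, F.parent w = some y)
    (hU : (F.desc x \ ⋃ w ∈ W, F.desc w) ⊆ A ∪ B)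
    (hP : {v | F.anc x v ∧ F.anc v y} ⊆ A) :
    (F.desc x \ ⋃ w ∈ W, F.desc w) ⊆ A := by
  rintro v ⟨hxv, hvW⟩
  rcases F.mem_spine_or_exists_child hxy hxv with hv | ⟨u, c, hu, hcu, hc, hcv⟩
  · exact hP hv
  have hcW : c ∉ W := fun hcW => hvW (Set.mem_biUnion hcW hcv)
  have hsub := F.desc_subset_contextFactor hW hu hcu hc hcW
  obtain ⟨w, hcw, huw⟩ := hred u c hcu
  have hwA : w ∈ A := H.mem_of_adj_of_separated hsep huw (hP hu) (hU (hsub hcw))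
  exact (hred.hConnectedOn_desc c).subset_of_separated (hsub.trans hU) hsep hcw hwA hcv

end ContextFactor

/-- The context factor `Cont_F(P, W)`, for the path `P` from `x` down to `y`, is
`F.desc x \ ⋃ w ∈ W, F.desc w`, and `V(P) = {v | F.anc x v ∧ F.anc v y}`. -/
theorem stmt_4_general {V : Type*} [Fintype V] (H : SetHypergraph V) (F : RootedForest V)
    (hred : IsReducedForest H F)
    (Red Blue : Set V)
    (hsep : ∀ e ∈ H.E, ¬((e ∩ Red).Nonempty ∧ (e ∩ Blue).Nonempty))
    (x y : V) (hxy : F.anc x y)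
    (W : Set V) (hW : ∀ w ∈ W, F.parent w = some y)
    (hU : (F.desc x \ ⋃ w ∈ W, F.desc w) ⊆ Red ∪ Blue)
    (hP : {v | F.anc x v ∧ F.anc v y} ⊆ Red ∨ {v | F.anc x v ∧ F.anc v y} ⊆ Blue) :
    (F.desc x \ ⋃ w ∈ W, F.desc w) ⊆ Red ∨ (F.desc x \ ⋃ w ∈ W, F.desc w) ⊆ Blue := by
  have hsep' : ∀ e ∈ H.E, ¬((e ∩ Blue).Nonempty ∧ (e ∩ Red).Nonempty) :=
    fun e he h => hsep e he h.symm
  rcases hP with hP | hP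
  · exact .inl (contextFactor_subset_of_spine_subset hred hsep hxy hW hU hP)
  · exact .inr (contextFactor_subset_of_spine_subset hred hsep' hxy hW
      (Set.union_comm Red Blue ▸ hU) hP)

/-- Monochromatic spine forces a monochromatic context factor.
Here the context factor `Cont_F(P, W)` with spine `P` (the path from `x` down to `y`)
and appendices `W` (a nonempty set of children of `y`) is the set
`F.desc x \ ⋃ w ∈ W, F.desc w`, and `V(P) = {v | F.anc x v ∧ F.anc v y}`. -/
theorem stmt_4 {V : Type*} [Fintype V] (H : SetHypergraph V) (F : RootedForest V)
    (hEF : IsEliminationForest H F) (hred : IsReducedForest H F)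
    (Red X Blue : Set V) (hcover : Red ∪ X ∪ Blue = Set.univ)
    (hRX : Disjoint Red X) (hRB : Disjoint Red Blue) (hXB : Disjoint X Blue)
    (hsep : ∀ e ∈ H.E, ¬((e ∩ Red).Nonempty ∧ (e ∩ Blue).Nonempty))
    (x y : V) (hxy : F.anc x y)
    (W : Set V) (hWne : W.Nonempty) (hW : ∀ w ∈ W, F.parent w = some y)
    (hU : (F.desc x \ ⋃ w ∈ W, F.desc w) ⊆ Red ∪ Blue)
    (hP : {v | F.anc x v ∧ F.anc v y} ⊆ Red ∨ {v | F.anc x v ∧ F.anc v y} ⊆ Blue) :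
    (F.desc x \ ⋃ w ∈ W, F.desc w) ⊆ Red ∨ (F.desc x \ ⋃ w ∈ W, F.desc w) ⊆ Blue :=
  stmt_4_general H F hred Red Blue hsep x y hxy W hW hU hP
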